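/- arXiv:math/0609402 — 2 statements merged into one kernel-verified Lean document; each statement's English description precedes it below -/
import Mathlib

section
/- With the notation of the previous statement (M₁ the separating measures for a wedge K ⊆ L⁰, Φ convex satisfying the growth condition), let Q₀, Q₁ ∈ M₁, 0 < x < 1, and suppose Q := xQ₀ + (1−x)Q₁ has finite loss-entropy (Q ∈ M̂_Φ). If Q₀ or Q₁ has finite entropy (i.e., lies in M_Φ = {Q ∈ M₁ : Φ(dQ/dP) ∈ L¹(P)}), then Q has finite entropy: Q ∈ M_Φ. -/
open MeasureTheory Set ENNReal

noncomputable section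

variable {Ω : Type*} [MeasurableSpace Ω]

/-- A wedge: nonempty, closed under addition and nonnegative scalar multiplication. -/
def IsWedgeF {V : Type*} [AddCommMonoid V] [SMul ℝ V] (C : Set V) : Prop :=
  C.Nonempty ∧ (∀ x ∈ C, ∀ y ∈ C, x + y ∈ C) ∧ ∀ c : ℝ, 0 ≤ c → ∀ x ∈ C, c • x ∈ C

/-- The set `M₁(P;K)` of separating measures for the wedge `K ⊆ L⁰`. -/
def Msep (P : Measure Ω) (K : Set (Ω →ₘ[P] ℝ)) : Set (Measure Ω) :=
  {Q | IsProbabilityMeasure Q ∧ Q ≪ P ∧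
    ∀ X ∈ K, Integrable (X : Ω → ℝ) Q ∧ ∫ ω, X ω ∂Q ≤ 0}

/-- Positive part of an extended-real value, as an extended nonnegative real. -/
def epos (x : EReal) : ℝ≥0∞ := if x = ⊤ then ⊤ else ENNReal.ofReal x.toReal

/-- Convexity of `Φ : [0,∞) → (−∞,∞]` on the nonnegative half-line. -/
def ConvexOnNonneg (Φ : ℝ → EReal) : Prop :=
  ∀ x ∈ Ici (0:ℝ), ∀ y ∈ Ici (0:ℝ), ∀ t ∈ Icc (0:ℝ) 1,
    Φ (t * x + (1 - t) * y) ≤ (t : EReal) * Φ x + ((1 - t : ℝ) : EReal) * Φ y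

/-- The growth condition on `Φ` (reasonable asymptotic elasticity). -/
def GrowthCond (Φ : ℝ → EReal) : Prop :=
  ∀ l0 l1 : ℝ, 0 < l0 → l0 ≤ l1 → ∃ a : ℝ, 0 < a ∧ ∃ b : ℝ, 0 < b ∧
    ∀ y : ℝ, 0 < y → ∀ l ∈ Icc l0 l1,
      epos (Φ (l * y)) ≤ ENNReal.ofReal a * epos (Φ y) + ENNReal.ofReal (b * (y + 1))

/-- `Q` has finite entropy: `E_P[Φ⁺(dQ/dP)] < ∞`. -/
def FiniteEntropy (Φ : ℝ → EReal) (P Q : Measure Ω) : Prop :=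
  ∫⁻ ω, epos (Φ ((Q.rnDeriv P ω).toReal)) ∂P < ⊤

/-- `Q` has finite loss-entropy: `E_P[Φ⁺(dQ/dP) 1_{dQ/dP ≥ 1}] < ∞`. -/
def FiniteLossEntropy (Φ : ℝ → EReal) (P Q : Measure Ω) : Prop :=
  ∫⁻ ω in {ω | 1 ≤ (Q.rnDeriv P ω).toReal},
    epos (Φ ((Q.rnDeriv P ω).toReal)) ∂P < ⊤

/-- The set `M_Φ` of separating measures with finite entropy. -/
def MPhi (Φ : ℝ → EReal) (P : Measure Ω) (K : Set (Ω →ₘ[P] ℝ)) : Set (Measure Ω) :=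
  {Q ∈ Msep P K | FiniteEntropy Φ P Q}

/-- The set `M̂_Φ` of separating measures with finite loss-entropy. -/
def MPhiHat (Φ : ℝ → EReal) (P : Measure Ω) (K : Set (Ω →ₘ[P] ℝ)) : Set (Measure Ω) :=
  {Q ∈ Msep P K | FiniteLossEntropy Φ P Q}



section Helpers
open Filter

lemma epos_coe (r : ℝ) : epos (r : EReal) = ENNReal.ofReal r := by
  simp [epos]


lemma epos_mono {u v : EReal} (h : u ≤ v) : epos u ≤ epos v := by
  unfold epos
  rcases eq_or_ne v ⊤ with hv | hv
  · simp [hv]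
  · have hu : u ≠ ⊤ := fun h' => hv (top_le_iff.mp (h' ▸ h))
    rw [if_neg hu, if_neg hv]
    rcases eq_or_ne u ⊥ with hb | hb
    · simp [hb]
    · exact ENNReal.ofReal_le_ofReal (EReal.toReal_le_toReal h hb hv)


lemma ofReal_combo_le {A B t : ℝ} (ht0 : 0 ≤ t) (ht1 : t ≤ 1) :
    ENNReal.ofReal (t * A + (1 - t) * B) ≤ ENNReal.ofReal A + ENNReal.ofReal B := by
  rcases le_total A B with h | h
  · have : t * A + (1 - t) * B ≤ B := by nlinarith
    exact le_trans (ENNReal.ofReal_le_ofReal this) le_add_self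
  · have : t * A + (1 - t) * B ≤ A := by nlinarith
    exact le_trans (ENNReal.ofReal_le_ofReal this) le_self_add


lemma epos_combo (Φ : ℝ → EReal) (hconv : ConvexOnNonneg Φ)
    (hbot : ∀ x : ℝ, 0 ≤ x → Φ x ≠ ⊥) {p q t : ℝ}
    (hp : 0 ≤ p) (hq : 0 ≤ q) (ht0 : 0 ≤ t) (ht1 : t ≤ 1) :
    epos (Φ (t * p + (1 - t) * q)) ≤ epos (Φ p) + epos (Φ q) := by
  rcases eq_or_ne (Φ p) ⊤ with hP | hP
  · simp [epos, hP]
  rcases eq_or_ne (Φ q) ⊤ with hQ | hQ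
  · simp [epos, hQ]
  have h := hconv p hp q hq t ⟨ht0, ht1⟩
  have hΦp : Φ p = (((Φ p).toReal : ℝ) : EReal) := (EReal.coe_toReal hP (hbot p hp)).symm
  have hΦq : Φ q = (((Φ q).toReal : ℝ) : EReal) := (EReal.coe_toReal hQ (hbot q hq)).symm
  rw [hΦp, hΦq, ← EReal.coe_mul, ← EReal.coe_mul, ← EReal.coe_add] at h
  calc epos (Φ (t * p + (1 - t) * q))
      ≤ epos (((t * (Φ p).toReal + (1 - t) * (Φ q).toReal : ℝ) : EReal)) := epos_mono h
    _ = ENNReal.ofReal (t * (Φ p).toReal + (1 - t) * (Φ q).toReal) := epos_coe _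
    _ ≤ ENNReal.ofReal (Φ p).toReal + ENNReal.ofReal (Φ q).toReal := ofReal_combo_le ht0 ht1
    _ = epos (Φ p) + epos (Φ q) := by rw [epos, epos, if_neg hP, if_neg hQ]


lemma phi_convexOn (Φ : ℝ → EReal) (hconv : ConvexOnNonneg Φ)
    (hfin : ∀ x : ℝ, 0 < x → Φ x ≠ ⊤) (hbot : ∀ x : ℝ, 0 ≤ x → Φ x ≠ ⊥) :
    ConvexOn ℝ (Ioi (0:ℝ)) (fun y => (Φ y).toReal) := by
  refine ⟨convex_Ioi 0, ?_⟩
  intro p hp q hq s t hs ht hst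
  have hp' : (0:ℝ) < p := hp
  have hq' : (0:ℝ) < q := hq
  have ht' : t = 1 - s := by linarith
  subst ht'
  have hs1 : s ≤ 1 := by linarith
  have hcomb : 0 < s * p + (1 - s) * q := by
    rcases eq_or_lt_of_le hs with h | h
    · nlinarith
    · nlinarith [mul_pos h hp', mul_nonneg (sub_nonneg.mpr hs1) hq'.le]
  have h := hconv p (le_of_lt hp') q (le_of_lt hq') s ⟨hs, by linarith⟩
  have hΦp : Φ p = (((Φ p).toReal : ℝ) : EReal) := (EReal.coe_toReal (hfin p hp') (hbot p hp'.le)).symm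
  have hΦq : Φ q = (((Φ q).toReal : ℝ) : EReal) := (EReal.coe_toReal (hfin q hq') (hbot q hq'.le)).symm
  rw [hΦp, hΦq] at h
  rw [← EReal.coe_mul, ← EReal.coe_mul, ← EReal.coe_add] at h
  have h2 : Φ (s * p + (1 - s) * q) = (((Φ (s * p + (1 - s) * q)).toReal : ℝ) : EReal) :=
    (EReal.coe_toReal (hfin _ hcomb) (hbot _ hcomb.le)).symm
  rw [h2, EReal.coe_le_coe_iff] at h
  simpa [smul_eq_mul] using h


lemma psi_exists (Φ : ℝ → EReal) (hconv : ConvexOnNonneg Φ)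
    (hfin : ∀ x : ℝ, 0 < x → Φ x ≠ ⊤) (hbot : ∀ x : ℝ, 0 ≤ x → Φ x ≠ ⊥) :
    ∃ ψ : ℝ → ℝ≥0∞, Measurable ψ ∧ ∀ y : ℝ, 0 < y → ψ y = epos (Φ y) := by
  set φ : ℝ → ℝ := fun y => (Φ y).toReal with hφ
  have hφcont : ContinuousOn φ (Ioi 0) :=
    ConvexOn.continuousOn isOpen_Ioi (phi_convexOn Φ hconv hfin hbot)
  set ψ : ℝ → ℝ≥0∞ := fun y =>
    liminf (fun n : ℕ => ENNReal.ofReal (φ (max y (1/(n+1))))) atTop with hψ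
  refine ⟨ψ, ?_, ?_⟩
  · refine Measurable.liminf (fun n => ?_)
    have hc : (0:ℝ) < 1/(n+1) := by positivity
    have hcont : Continuous (fun y : ℝ => φ (max y (1/(n+1)))) := by
      refine hφcont.comp_continuous (continuous_id.max continuous_const) (fun y => ?_)
      exact lt_of_lt_of_le hc (le_max_right _ _)
    exact ENNReal.continuous_ofReal.comp hcont |>.measurable
  · intro y hy
    have hev : (fun n : ℕ => ENNReal.ofReal (φ (max y (1/(n+1))))) =ᶠ[atTop]
        (fun _ => ENNReal.ofReal (φ y)) := by
      obtain ⟨N, hN⟩ := exists_nat_gt (1/y)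
      filter_upwards [eventually_ge_atTop N] with n hn
      have h1 : 1/((n:ℝ)+1) ≤ y := by
        rw [div_le_iff₀ (by positivity)]
        rw [div_lt_iff₀ hy] at hN
        have hn' : (N:ℝ) ≤ n := Nat.cast_le.mpr hn
        nlinarith
      rw [max_eq_left h1]
    have htend : Tendsto (fun n : ℕ => ENNReal.ofReal (φ (max y (1/(n+1))))) atTop
        (nhds (ENNReal.ofReal (φ y))) :=
      Tendsto.congr' hev.symm tendsto_const_nhds
    rw [hψ]
    simp only
    rw [htend.liminf_eq]
    have : Φ y = ((φ y : ℝ) : EReal) := (EReal.coe_toReal (hfin y hy) (hbot y hy.le)).symm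
    rw [this]
    simp [epos]


lemma finiteEntropy_combo (P : Measure Ω) [IsProbabilityMeasure P]
    (Φ : ℝ → EReal) (hconv : ConvexOnNonneg Φ)
    (hfin : ∀ x : ℝ, 0 < x → Φ x ≠ ⊤) (hbot : ∀ x : ℝ, 0 ≤ x → Φ x ≠ ⊥)
    (hgrowth : GrowthCond Φ)
    (Q₀ Q₁ : Measure Ω) [IsProbabilityMeasure Q₀] [IsProbabilityMeasure Q₁]
    (x : ℝ) (hx0 : 0 < x) (hx1 : x < 1)
    (hloss : FiniteLossEntropy Φ P (ENNReal.ofReal x • Q₀ + ENNReal.ofReal (1 - x) • Q₁))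
    (hent : FiniteEntropy Φ P Q₀) :
    FiniteEntropy Φ P (ENNReal.ofReal x • Q₀ + ENNReal.ofReal (1 - x) • Q₁) := by
  haveI h0f : IsFiniteMeasure (ENNReal.ofReal x • Q₀) :=
    Measure.smul_finite _ ENNReal.ofReal_ne_top
  haveI h1f : IsFiniteMeasure (ENNReal.ofReal (1 - x) • Q₁) :=
    Measure.smul_finite _ ENNReal.ofReal_ne_top
  set Q : Measure Ω := ENNReal.ofReal x • Q₀ + ENNReal.ofReal (1 - x) • Q₁ with hQdef
  -- the density of Q
  have hd : (fun ω => (Q.rnDeriv P ω).toReal) =ᵐ[P]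
      (fun ω => x * (Q₀.rnDeriv P ω).toReal + (1 - x) * (Q₁.rnDeriv P ω).toReal) := by
    have h1 : Q.rnDeriv P =ᵐ[P]
        (ENNReal.ofReal x • Q₀).rnDeriv P + (ENNReal.ofReal (1 - x) • Q₁).rnDeriv P :=
      Measure.rnDeriv_add _ _ P
    have h2 : (ENNReal.ofReal x • Q₀).rnDeriv P =ᵐ[P] ENNReal.ofReal x • Q₀.rnDeriv P :=
      Measure.rnDeriv_smul_left_of_ne_top Q₀ P ENNReal.ofReal_ne_top
    have h3 : (ENNReal.ofReal (1 - x) • Q₁).rnDeriv P =ᵐ[P]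
        ENNReal.ofReal (1 - x) • Q₁.rnDeriv P :=
      Measure.rnDeriv_smul_left_of_ne_top Q₁ P ENNReal.ofReal_ne_top
    have h4 := Measure.rnDeriv_lt_top Q₀ P
    have h5 := Measure.rnDeriv_lt_top Q₁ P
    filter_upwards [h1, h2, h3, h4, h5] with ω e1 e2 e3 l0 l1
    have : Q.rnDeriv P ω
        = ENNReal.ofReal x * Q₀.rnDeriv P ω + ENNReal.ofReal (1 - x) * Q₁.rnDeriv P ω := by
      rw [e1]; simp only [Pi.add_apply, e2, e3, Pi.smul_apply, smul_eq_mul]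
    rw [this, ENNReal.toReal_add (by finiteness) (by finiteness), ENNReal.toReal_mul,
      ENNReal.toReal_mul, ENNReal.toReal_ofReal hx0.le,
      ENNReal.toReal_ofReal (by linarith : (0:ℝ) ≤ 1 - x)]
  obtain ⟨a, ha, b, hb, hab⟩ := hgrowth x x hx0 le_rfl
  obtain ⟨ψ, hψmeas, hψ⟩ := psi_exists Φ hconv hfin hbot
  set f₀ : Ω → ℝ := fun ω => (Q₀.rnDeriv P ω).toReal with hf₀def
  have hf₀meas : Measurable f₀ := (Measure.measurable_rnDeriv Q₀ P).ennreal_toReal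
  set H : Ω → ℝ≥0∞ := fun ω => epos (Φ (f₀ ω)) with hHdef
  have hH_eq : H = fun ω => if f₀ ω = 0 then epos (Φ 0) else ψ (f₀ ω) := by
    funext ω
    by_cases h : f₀ ω = 0
    · simp [hHdef, h]
    · have hpos : 0 < f₀ ω := lt_of_le_of_ne ENNReal.toReal_nonneg (Ne.symm h)
      simp [hHdef, h, hψ _ hpos]
  have hHmeas : Measurable H := by
    rw [hH_eq]
    exact Measurable.ite (hf₀meas (measurableSet_singleton 0)) measurable_const
      (hψmeas.comp hf₀meas)
  have hHfin : ∫⁻ ω, H ω ∂P < ⊤ := hent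
  set L : Ω → ℝ≥0∞ := fun ω => ENNReal.ofReal (b * (f₀ ω + 1)) with hLdef
  have hLmeas : Measurable L := (hf₀meas.add_const 1).const_mul b |>.ennreal_ofReal
  have hLfin : ∫⁻ ω, L ω ∂P < ⊤ := by
    have hLle : ∀ ω, L ω ≤ ENNReal.ofReal b * (Q₀.rnDeriv P ω + 1) := by
      intro ω
      rw [hLdef]
      simp only
      rw [ENNReal.ofReal_mul hb.le, ENNReal.ofReal_add ENNReal.toReal_nonneg zero_le_one,
        ENNReal.ofReal_one]
      exact mul_le_mul_right (add_le_add_left ENNReal.ofReal_toReal_le 1) _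
    calc ∫⁻ ω, L ω ∂P ≤ ∫⁻ ω, ENNReal.ofReal b * (Q₀.rnDeriv P ω + 1) ∂P :=
          lintegral_mono hLle
      _ = ENNReal.ofReal b * (∫⁻ ω, Q₀.rnDeriv P ω ∂P + 1 * P univ) := by
          rw [lintegral_const_mul' _ _ ENNReal.ofReal_ne_top,
            lintegral_add_right _ measurable_const, lintegral_const]
      _ < ⊤ := by
          have h1 : ∫⁻ ω, Q₀.rnDeriv P ω ∂P ≤ Q₀ univ := Measure.lintegral_rnDeriv_le
          have : Q₀ univ = 1 := measure_univ
          refine ENNReal.mul_lt_top ENNReal.ofReal_lt_top ?_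
          rw [one_mul, measure_univ]
          exact ENNReal.add_lt_top.mpr ⟨lt_of_le_of_lt h1 (this ▸ ENNReal.one_lt_top), ENNReal.one_lt_top⟩
  set G : Ω → ℝ≥0∞ := fun ω =>
    epos (Φ 1) + (ENNReal.ofReal a * H ω + L ω) + H ω with hGdef
  have heposone : epos (Φ 1) ≠ ⊤ := by
    rw [epos, if_neg (hfin 1 one_pos)]
    exact ENNReal.ofReal_ne_top
  -- pointwise bound on the set where the density is < 1
  have hpt : ∀ᵐ ω ∂P, (Q.rnDeriv P ω).toReal < 1 →
      epos (Φ ((Q.rnDeriv P ω).toReal)) ≤ G ω := by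
    filter_upwards [hd] with ω hω hlt
    set u : ℝ := (Q.rnDeriv P ω).toReal with hudef
    have hu0 : 0 ≤ u := ENNReal.toReal_nonneg
    have hf₀0 : 0 ≤ f₀ ω := ENNReal.toReal_nonneg
    have hf₁0 : 0 ≤ (Q₁.rnDeriv P ω).toReal := ENNReal.toReal_nonneg
    by_cases h0 : f₀ ω = 0
    · -- u = t*0 + (1-t)*1 with t = 1-u
      have hrep : u = (1 - u) * 0 + (1 - (1 - u)) * 1 := by ring
      have hcombo := epos_combo Φ hconv hbot (le_refl (0:ℝ)) zero_le_one
        (by linarith : (0:ℝ) ≤ 1 - u) (by linarith : (1:ℝ) - u ≤ 1)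
      rw [← hrep] at hcombo
      calc epos (Φ u) ≤ epos (Φ 0) + epos (Φ 1) := hcombo
        _ = epos (Φ 1) + H ω := by rw [hHdef]; simp only [h0]; rw [add_comm]
        _ ≤ G ω := by rw [hGdef]; exact add_le_add_left le_self_add _
    · have hf₀pos : 0 < f₀ ω := lt_of_le_of_ne hf₀0 (Ne.symm h0)
      set p : ℝ := x * f₀ ω with hpdef
      have hppos : 0 < p := mul_pos hx0 hf₀pos
      have hpu : p ≤ u := by
        rw [hω]
        have : 0 ≤ (1 - x) * (Q₁.rnDeriv P ω).toReal :=
          mul_nonneg (by linarith) hf₁0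
        linarith
      have hp1 : p < 1 := lt_of_le_of_lt hpu hlt
      set t : ℝ := (1 - u) / (1 - p) with htdef
      have ht0 : 0 ≤ t := div_nonneg (by linarith) (by linarith)
      have ht1 : t ≤ 1 := (div_le_one (by linarith)).mpr (by linarith)
      have hrep : t * p + (1 - t) * 1 = u := by
        have h1 : t * (1 - p) = 1 - u := div_mul_cancel₀ _ (by linarith : (1:ℝ) - p ≠ 0)
        ring_nf at h1 ⊢
        linarith
      have hcombo := epos_combo Φ hconv hbot hppos.le zero_le_one ht0 ht1
      rw [hrep] at hcombo
      have hgrow := hab (f₀ ω) hf₀pos x ⟨le_rfl, le_rfl⟩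
      calc epos (Φ u) ≤ epos (Φ p) + epos (Φ 1) := hcombo
        _ ≤ (ENNReal.ofReal a * H ω + L ω) + epos (Φ 1) := add_le_add_left hgrow _
        _ = epos (Φ 1) + (ENNReal.ofReal a * H ω + L ω) := add_comm _ _
        _ ≤ G ω := by rw [hGdef]; exact le_self_add
  -- split the integral
  have hfmeas : Measurable (fun ω => (Q.rnDeriv P ω).toReal) :=
    (Measure.measurable_rnDeriv Q P).ennreal_toReal
  have hS : MeasurableSet {ω | 1 ≤ (Q.rnDeriv P ω).toReal} :=
    measurableSet_le measurable_const hfmeas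
  rw [FiniteEntropy, ← lintegral_add_compl (fun ω => epos (Φ ((Q.rnDeriv P ω).toReal))) hS]
  refine ENNReal.add_lt_top.mpr ⟨hloss, ?_⟩
  have hpt' : ∀ᵐ ω ∂P, ω ∈ {ω | 1 ≤ (Q.rnDeriv P ω).toReal}ᶜ →
      epos (Φ ((Q.rnDeriv P ω).toReal)) ≤ G ω :=
    hpt.mono (fun ω h hmem => h (not_le.mp hmem))
  calc ∫⁻ ω in {ω | 1 ≤ (Q.rnDeriv P ω).toReal}ᶜ, epos (Φ ((Q.rnDeriv P ω).toReal)) ∂P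
      ≤ ∫⁻ ω in {ω | 1 ≤ (Q.rnDeriv P ω).toReal}ᶜ, G ω ∂P :=
        lintegral_mono_ae ((ae_restrict_iff' hS.compl).mpr hpt')
    _ ≤ ∫⁻ ω, G ω ∂P := lintegral_mono' Measure.restrict_le_self le_rfl
    _ = epos (Φ 1) * P univ + (ENNReal.ofReal a * ∫⁻ ω, H ω ∂P + ∫⁻ ω, L ω ∂P)
          + ∫⁻ ω, H ω ∂P := by
        rw [hGdef]
        rw [lintegral_add_right _ hHmeas, lintegral_add_left measurable_const,
          lintegral_add_left (hHmeas.const_mul _), lintegral_const_mul _ hHmeas]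
        rw [lintegral_const]
    _ < ⊤ := by
        rw [measure_univ, mul_one]
        refine ENNReal.add_lt_top.mpr ⟨ENNReal.add_lt_top.mpr ⟨?_, ?_⟩, hHfin⟩
        · exact heposone.lt_top
        · exact ENNReal.add_lt_top.mpr ⟨ENNReal.mul_lt_top ENNReal.ofReal_lt_top hHfin, hLfin⟩

end Helpers

/-- If a strict convex combination `Q` of `Q₀, Q₁ ∈ M₁` has finite loss-entropy
and one of `Q₀, Q₁` has finite entropy, then `Q` has finite entropy. -/
theorem mem_MPhi_of_combination (P : Measure Ω) [IsProbabilityMeasure P]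
    (K : Set (Ω →ₘ[P] ℝ)) (hK : IsWedgeF K)
    (Φ : ℝ → EReal) (hconv : ConvexOnNonneg Φ)
    (hfin : ∀ x : ℝ, 0 < x → Φ x ≠ ⊤) (hbot : ∀ x : ℝ, 0 ≤ x → Φ x ≠ ⊥)
    (hgrowth : GrowthCond Φ)
    (Q₀ Q₁ : Measure Ω) (h0 : Q₀ ∈ Msep P K) (h1 : Q₁ ∈ Msep P K)
    (x : ℝ) (hx0 : 0 < x) (hx1 : x < 1)
    (hQhat : ENNReal.ofReal x • Q₀ + ENNReal.ofReal (1 - x) • Q₁ ∈ MPhiHat Φ P K)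
    (hone : Q₀ ∈ MPhi Φ P K ∨ Q₁ ∈ MPhi Φ P K) :
    ENNReal.ofReal x • Q₀ + ENNReal.ofReal (1 - x) • Q₁ ∈ MPhi Φ P K := by
  refine ⟨hQhat.1, ?_⟩
  haveI : IsProbabilityMeasure Q₀ := h0.1
  haveI : IsProbabilityMeasure Q₁ := h1.1
  rcases hone with h | h
  · exact finiteEntropy_combo P Φ hconv hfin hbot hgrowth Q₀ Q₁ x hx0 hx1 hQhat.2 h.2
  · have hswap : ENNReal.ofReal x • Q₀ + ENNReal.ofReal (1 - x) • Q₁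
        = ENNReal.ofReal (1 - x) • Q₁ + ENNReal.ofReal (1 - (1 - x)) • Q₀ := by
      rw [show 1 - (1 - x) = x by ring, add_comm]
    rw [hswap] at hQhat ⊢
    exact finiteEntropy_combo P Φ hconv hfin hbot hgrowth Q₁ Q₀ (1 - x)
      (by linarith) (by linarith) hQhat.2 h.2


end
end

section
/- Let K be a wedge in L⁰, ∅ ≠ M ⊆ M₁(P;K), E = ⋂_{Q∈M} L¹(Q), F = span{dQ/dP : Q ∈ M} ⊆ L¹(P), paired by ⟨z,w⟩ = E_P[zw], and let c_E(K) denote the σ(E,F)-closure of s_E(K) = K − E_+. Then the following are equivalent: (i) the σ(F,E)-closure of cone(R(M)) equals F ∩ cone(R(M₁)); (ii) R(M)^◁ = c_E(K); (iii) the σ(F,E)-closure of cone(R(M)) equals c_E(K)^◁ = s_E(K)^◁. -/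
open MeasureTheory Set ENNReal

noncomputable section

variable {Ω : Type*} [MeasurableSpace Ω]

/-- The smallest wedge containing `S`. -/
def wedgeGenF {V : Type*} [AddCommMonoid V] [SMul ℝ V] (S : Set V) : Set V :=
  ⋂₀ {C : Set V | IsWedgeF C ∧ S ⊆ C}

/-- `R(Q) = dQ/dP`, the Radon–Nikodym derivative as an element of `L⁰(P)`. -/
def dens (P Q : Measure Ω) : Ω →ₘ[P] ℝ :=
  AEEqFun.mk (fun ω => (Q.rnDeriv P ω).toReal)
    (Measure.measurable_rnDeriv Q P).ennreal_toReal.aestronglyMeasurable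

/-- The bilinear pairing `⟨z,w⟩ = E_P[zw]`. -/
def pairP (P : Measure Ω) (z w : Ω →ₘ[P] ℝ) : ℝ :=
  ∫ ω, z ω * w ω ∂P

/-- the space `E = ⋂_{Q ∈ M} L¹(Q)` of `M`-integrable contingent claims. -/
def Espace (P : Measure Ω) (M : Set (Measure Ω)) : Set (Ω →ₘ[P] ℝ) :=
  {X | ∀ Q ∈ M, Integrable (X : Ω → ℝ) Q}

/-- the space `F`, the linear span of the densities `dQ/dP`, `Q ∈ M`. -/
def Fspace (P : Measure Ω) (M : Set (Measure Ω)) : Set (Ω →ₘ[P] ℝ) :=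
  (Submodule.span ℝ (dens P '' M) : Set (Ω →ₘ[P] ℝ))

/-- The umbrella hull `s_E(K) = K − E₊` inside `E`. -/
def umbrella (P : Measure Ω) (K D : Set (Ω →ₘ[P] ℝ)) : Set (Ω →ₘ[P] ℝ) :=
  {X | ∃ g ∈ K, ∃ p ∈ D, (0 ≤ᵐ[P] (p : Ω → ℝ)) ∧ X = g - p}

/-- The polar wedge, within `D`, of a set `A`, for the pairing `⟨z,w⟩ = E_P[zw]`. -/
def polarIn (P : Measure Ω) (D A : Set (Ω →ₘ[P] ℝ)) : Set (Ω →ₘ[P] ℝ) :=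
  {w ∈ D | ∀ z ∈ A, pairP P z w ≤ 0}

/-- The closure of `S` in the weak topology generated by the functionals
`v ↦ ⟨v,w⟩ = E_P[vw]`, `w ∈ D`. -/
def wcl (P : Measure Ω) (D S : Set (Ω →ₘ[P] ℝ)) : Set (Ω →ₘ[P] ℝ) :=
  {v | ∀ (n : ℕ) (w : Fin n → (Ω →ₘ[P] ℝ)), (∀ i, w i ∈ D) →
    ∀ ε : ℝ, 0 < ε → ∃ s ∈ S, ∀ i, |pairP P v (w i) - pairP P s (w i)| < ε}

/-- `c_E(K)`: the `σ(E,F)`-closure (within `E`) of the umbrella hull `s_E(K)`. -/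
def cEK (P : Measure Ω) (K : Set (Ω →ₘ[P] ℝ)) (M : Set (Measure Ω)) : Set (Ω →ₘ[P] ℝ) :=
  Espace P M ∩ wcl P (Fspace P M) (umbrella P K (Espace P M))

/-! ## pairP basics -/

variable {P : Measure Ω}

lemma pairP_comm (z w : Ω →ₘ[P] ℝ) : pairP P z w = pairP P w z := by
  simp [pairP, mul_comm]

lemma pairP_zero_left (w : Ω →ₘ[P] ℝ) : pairP P 0 w = 0 := by
  unfold pairP
  rw [show (0:ℝ) = ∫ (_ : Ω), (0:ℝ) ∂P by simp]
  apply integral_congr_ae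
  filter_upwards [AEEqFun.coeFn_zero (μ := P) (β := ℝ)] with ω h
  rw [h]; simp

lemma pairP_zero_right (z : Ω →ₘ[P] ℝ) : pairP P z 0 = 0 := by
  rw [pairP_comm]; exact pairP_zero_left z

lemma pairP_smul_left (c : ℝ) (x w : Ω →ₘ[P] ℝ) : pairP P (c • x) w = c * pairP P x w := by
  unfold pairP
  rw [show c * ∫ (ω : Ω), x ω * w ω ∂P = c • ∫ (ω : Ω), x ω * w ω ∂P from rfl,
    ← integral_smul]
  apply integral_congr_ae
  filter_upwards [AEEqFun.coeFn_smul c x] with ω h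
  rw [h]; simp [mul_assoc]

lemma pairP_smul_right (c : ℝ) (x w : Ω →ₘ[P] ℝ) : pairP P x (c • w) = c * pairP P x w := by
  rw [pairP_comm, pairP_smul_left, pairP_comm]

lemma pairP_add_left {x y : Ω →ₘ[P] ℝ} (w : Ω →ₘ[P] ℝ)
    (hx : Integrable (fun ω => x ω * w ω) P) (hy : Integrable (fun ω => y ω * w ω) P) :
    pairP P (x + y) w = pairP P x w + pairP P y w := by
  unfold pairP
  rw [← integral_add hx hy]
  apply integral_congr_ae
  filter_upwards [AEEqFun.coeFn_add x y] with ω h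
  simp [h]; ring

lemma pairP_add_right {x y : Ω →ₘ[P] ℝ} (w : Ω →ₘ[P] ℝ)
    (hx : Integrable (fun ω => w ω * x ω) P) (hy : Integrable (fun ω => w ω * y ω) P) :
    pairP P w (x + y) = pairP P w x + pairP P w y := by
  rw [pairP_comm, pairP_add_left w (by simpa [mul_comm] using hx) (by simpa [mul_comm] using hy),
    pairP_comm x w, pairP_comm y w]

lemma pairP_sub_left {x y : Ω →ₘ[P] ℝ} (w : Ω →ₘ[P] ℝ)
    (hx : Integrable (fun ω => x ω * w ω) P) (hy : Integrable (fun ω => y ω * w ω) P) :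
    pairP P (x - y) w = pairP P x w - pairP P y w := by
  unfold pairP
  rw [← integral_sub hx hy]
  apply integral_congr_ae
  filter_upwards [AEEqFun.coeFn_sub x y] with ω h
  simp [h]; ring

/-! ## wedge basics -/

lemma zero_mem_wedge {V : Type*} [AddCommMonoid V] [Module ℝ V] {C : Set V}
    (hC : IsWedgeF C) : (0 : V) ∈ C := by
  obtain ⟨x, hx⟩ := hC.1
  simpa using hC.2.2 0 le_rfl x hx

lemma subset_wedgeGenF {V : Type*} [AddCommMonoid V] [SMul ℝ V] (S : Set V) :
    S ⊆ wedgeGenF S := fun x hx => fun C hC => hC.2 hx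

lemma wedgeGenF_subset {V : Type*} [AddCommMonoid V] [SMul ℝ V] {S C : Set V}
    (hC : IsWedgeF C) (hSC : S ⊆ C) : wedgeGenF S ⊆ C :=
  sInter_subset_of_mem ⟨hC, hSC⟩

lemma isWedgeF_wedgeGenF {V : Type*} [AddCommMonoid V] [Module ℝ V] (S : Set V) :
    IsWedgeF (wedgeGenF S) := by
  refine ⟨⟨0, ?_⟩, ?_, ?_⟩
  · intro C hC; exact zero_mem_wedge hC.1
  · intro x hx y hy C hC
    exact hC.1.2.1 x (hx C hC) y (hy C hC)
  · intro c hc x hx C hC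
    exact hC.1.2.2 c hc x (hx C hC)

lemma zero_mem_wedgeGenF {V : Type*} [AddCommMonoid V] [Module ℝ V] (S : Set V) :
    (0 : V) ∈ wedgeGenF S := zero_mem_wedge (isWedgeF_wedgeGenF S)

/-! ## Espace and dens basics -/

section Meas
variable {M : Set (Measure Ω)} {P : Measure Ω}

lemma Espace.zero_mem (hM : ∀ Q ∈ M, Q ≪ P) : (0 : Ω →ₘ[P] ℝ) ∈ Espace P M := by
  intro Q hQ
  exact (integrable_zero Ω ℝ Q).congr ((hM Q hQ).ae_eq (AEEqFun.coeFn_zero (β := ℝ))).symm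

lemma Espace.add_mem (hM : ∀ Q ∈ M, Q ≪ P) {x y : Ω →ₘ[P] ℝ}
    (hx : x ∈ Espace P M) (hy : y ∈ Espace P M) : x + y ∈ Espace P M := by
  intro Q hQ
  exact ((hx Q hQ).add (hy Q hQ)).congr ((hM Q hQ).ae_eq (AEEqFun.coeFn_add x y)).symm

lemma Espace.smul_mem (hM : ∀ Q ∈ M, Q ≪ P) (c : ℝ) {x : Ω →ₘ[P] ℝ}
    (hx : x ∈ Espace P M) : c • x ∈ Espace P M := by
  intro Q hQ
  exact ((hx Q hQ).smul c).congr ((hM Q hQ).ae_eq (AEEqFun.coeFn_smul c x)).symm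

lemma Espace.sub_mem (hM : ∀ Q ∈ M, Q ≪ P) {x y : Ω →ₘ[P] ℝ}
    (hx : x ∈ Espace P M) (hy : y ∈ Espace P M) : x - y ∈ Espace P M := by
  intro Q hQ
  exact ((hx Q hQ).sub (hy Q hQ)).congr ((hM Q hQ).ae_eq (AEEqFun.coeFn_sub x y)).symm

lemma Espace.one_mem (hM : ∀ Q ∈ M, Q ≪ P) (hMfin : ∀ Q ∈ M, IsFiniteMeasure Q) :
    (1 : Ω →ₘ[P] ℝ) ∈ Espace P M := by
  intro Q hQ
  have := hMfin Q hQ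
  exact (integrable_const (1:ℝ)).congr ((hM Q hQ).ae_eq (AEEqFun.coeFn_one (β := ℝ))).symm

lemma dens_coeFn (Q : Measure Ω) :
    (dens P Q : Ω → ℝ) =ᵐ[P] fun ω => (Q.rnDeriv P ω).toReal :=
  AEEqFun.coeFn_mk _ _

lemma dens_nonneg (Q : Measure Ω) : 0 ≤ᵐ[P] (dens P Q : Ω → ℝ) := by
  filter_upwards [dens_coeFn (P := P) Q] with ω h
  rw [h]; exact ENNReal.toReal_nonneg

lemma integrable_mul_dens_iff {Q : Measure Ω} [IsFiniteMeasure Q] [IsFiniteMeasure P]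
    (hQP : Q ≪ P) (g : Ω →ₘ[P] ℝ) :
    Integrable (fun ω => g ω * (dens P Q : Ω → ℝ) ω) P ↔ Integrable (g : Ω → ℝ) Q := by
  rw [← MeasureTheory.integrable_rnDeriv_smul_iff hQP]
  apply integrable_congr
  filter_upwards [dens_coeFn (P := P) Q] with ω h
  rw [h]; simp [mul_comm]

lemma pairP_dens {Q : Measure Ω} [IsFiniteMeasure Q] [IsFiniteMeasure P]
    (hQP : Q ≪ P) (g : Ω →ₘ[P] ℝ) :
    pairP P g (dens P Q) = ∫ ω, g ω ∂Q := by
  unfold pairP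
  rw [← MeasureTheory.integral_rnDeriv_smul hQP (f := (g : Ω → ℝ))]
  apply integral_congr_ae
  filter_upwards [dens_coeFn (P := P) Q] with ω h
  rw [h]; simp [mul_comm]

/-- Key integrability: products of elements of `E` and `F` are `P`-integrable. -/
lemma integrable_mul_EF [IsFiniteMeasure P] (hM : ∀ Q ∈ M, Q ≪ P)
    (hMfin : ∀ Q ∈ M, IsFiniteMeasure Q)
    {z w : Ω →ₘ[P] ℝ} (hz : z ∈ Espace P M) (hw : w ∈ Fspace P M) :
    Integrable (fun ω => z ω * w ω) P := by
  have hspan : w ∈ Submodule.span ℝ (dens P '' M) := hw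
  clear hw
  induction hspan using Submodule.span_induction with
  | mem x hx =>
    obtain ⟨Q, hQ, rfl⟩ := hx
    have := hMfin Q hQ
    exact (integrable_mul_dens_iff (hM Q hQ) z).2 (hz Q hQ)
  | zero =>
    apply (integrable_zero Ω ℝ P).congr
    apply Filter.EventuallyEq.symm
    filter_upwards [AEEqFun.coeFn_zero (μ := P) (β := ℝ)] with ω h
    rw [h]; simp
  | add x y _ _ hx hy =>
    apply (hx.add hy).congr
    apply Filter.EventuallyEq.symm
    filter_upwards [AEEqFun.coeFn_add x y] with ω h
    rw [h]; simp; ring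
  | smul c x _ hx =>
    apply (hx.smul c).congr
    apply Filter.EventuallyEq.symm
    filter_upwards [AEEqFun.coeFn_smul c x] with ω h
    rw [h]; simp; ring

end Meas
/-! ## polar and weak-closure lemmas -/

section Polar
variable {P : Measure Ω}

lemma subset_wcl {D S : Set (Ω →ₘ[P] ℝ)} : S ⊆ wcl P D S := by
  intro v hv n w _ ε hε
  exact ⟨v, hv, fun i => by simpa using hε⟩

lemma polarIn_mono {D A B : Set (Ω →ₘ[P] ℝ)} (h : A ⊆ B) : polarIn P D B ⊆ polarIn P D A :=
  fun w hw => ⟨hw.1, fun z hz => hw.2 z (h hz)⟩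

/-- The polar of the weak closure (within `G`) equals the polar of the set. -/
lemma polarIn_wcl {G D S : Set (Ω →ₘ[P] ℝ)} (hSG : S ⊆ G) :
    polarIn P D (G ∩ wcl P D S) = polarIn P D S := by
  apply Set.Subset.antisymm
  · exact polarIn_mono (fun s hs => ⟨hSG hs, subset_wcl hs⟩)
  · rintro z ⟨hzD, hz⟩
    refine ⟨hzD, ?_⟩
    rintro v ⟨_, hvw⟩
    by_contra hc
    push_neg at hc
    obtain ⟨s, hs, hdist⟩ := hvw 1 (fun _ => z) (fun _ => hzD) (pairP P v z) hc
    have h1 := hdist 0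
    have h2 := hz s hs
    have : pairP P v z ≤ pairP P v z - pairP P s z := by linarith
    exact absurd (lt_of_le_of_lt (this.trans (le_abs_self _)) h1) (lt_irrefl _)

/-- The polar of the generated wedge equals the polar of the set. -/
lemma polarIn_wedgeGenF {A G D : Set (Ω →ₘ[P] ℝ)} (hAG : A ⊆ G) (hG : IsWedgeF G)
    (hint : ∀ x ∈ G, ∀ w ∈ D, Integrable (fun ω => x ω * w ω) P) :
    polarIn P D (wedgeGenF A) = polarIn P D A := by
  apply Set.Subset.antisymm
  · exact polarIn_mono (subset_wedgeGenF A)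
  · rintro z ⟨hzD, hz⟩
    refine ⟨hzD, ?_⟩
    intro s hs
    have hW : IsWedgeF {s : Ω →ₘ[P] ℝ | s ∈ G ∧ pairP P s z ≤ 0} := by
      refine ⟨⟨0, zero_mem_wedge hG, by rw [pairP_zero_left]⟩, ?_, ?_⟩
      · rintro x ⟨hxG, hx⟩ y ⟨hyG, hy⟩
        refine ⟨hG.2.1 x hxG y hyG, ?_⟩
        rw [pairP_add_left z (hint x hxG z hzD) (hint y hyG z hzD)]
        linarith
      · rintro c hc x ⟨hxG, hx⟩
        refine ⟨hG.2.2 c hc x hxG, ?_⟩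
        rw [pairP_smul_left]
        exact mul_nonpos_of_nonneg_of_nonpos hc hx
    have : wedgeGenF A ⊆ {s : Ω →ₘ[P] ℝ | s ∈ G ∧ pairP P s z ≤ 0} :=
      wedgeGenF_subset hW (fun a ha => ⟨hAG ha, hz a ha⟩)
    exact (this hs).2

end Polar
/-! ## the bipolar theorem -/

section Bipolar
variable {P : Measure Ω}

lemma sum_smul_mem_D {D : Set (Ω →ₘ[P] ℝ)} (hD0 : (0 : Ω →ₘ[P] ℝ) ∈ D)
    (hDadd : ∀ x ∈ D, ∀ y ∈ D, x + y ∈ D) (hDsmul : ∀ (c : ℝ), ∀ x ∈ D, c • x ∈ D)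
    {n : ℕ} (c : Fin n → ℝ) (w : Fin n → (Ω →ₘ[P] ℝ)) (hw : ∀ i, w i ∈ D)
    (t : Finset (Fin n)) : (∑ i ∈ t, c i • w i) ∈ D := by
  classical
  induction t using Finset.induction_on with
  | empty => simpa using hD0
  | insert _ _ ha ih =>
    rw [Finset.sum_insert ha]
    exact hDadd _ (hDsmul _ _ (hw _)) _ ih

lemma pairP_sum_right {D : Set (Ω →ₘ[P] ℝ)} (hD0 : (0 : Ω →ₘ[P] ℝ) ∈ D)
    (hDadd : ∀ x ∈ D, ∀ y ∈ D, x + y ∈ D) (hDsmul : ∀ (c : ℝ), ∀ x ∈ D, c • x ∈ D)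
    {n : ℕ} (c : Fin n → ℝ) (w : Fin n → (Ω →ₘ[P] ℝ)) (hw : ∀ i, w i ∈ D)
    (x : Ω →ₘ[P] ℝ) (hx : ∀ w' ∈ D, Integrable (fun ω => x ω * w' ω) P)
    (t : Finset (Fin n)) :
    pairP P x (∑ i ∈ t, c i • w i) = ∑ i ∈ t, c i * pairP P x (w i) := by
  classical
  induction t using Finset.induction_on with
  | empty => simpa using pairP_zero_right x
  | @insert a t ha ih =>
    rw [Finset.sum_insert ha, Finset.sum_insert ha,
      pairP_add_right x (hx _ (hDsmul _ _ (hw a)))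
        (hx _ (sum_smul_mem_D hD0 hDadd hDsmul c w hw t)),
      pairP_smul_right, ih]

/-- The bipolar theorem: the weak closure (within `G`) of a wedge `S ⊆ G`
equals its double polar. -/
lemma bipolarF {G D S : Set (Ω →ₘ[P] ℝ)}
    (hSG : S ⊆ G) (hS : IsWedgeF S)
    (hD0 : (0 : Ω →ₘ[P] ℝ) ∈ D) (hDadd : ∀ x ∈ D, ∀ y ∈ D, x + y ∈ D)
    (hDsmul : ∀ (c : ℝ), ∀ x ∈ D, c • x ∈ D)
    (hint : ∀ x ∈ G, ∀ w ∈ D, Integrable (fun ω => x ω * w ω) P) :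
    G ∩ wcl P D S = polarIn P G (polarIn P D S) := by
  apply Set.Subset.antisymm
  · rintro v ⟨hvG, hvw⟩
    refine ⟨hvG, ?_⟩
    rintro z ⟨hzD, hz⟩
    by_contra hc
    push_neg at hc
    obtain ⟨s, hs, hdist⟩ := hvw 1 (fun _ => z) (fun _ => hzD) (pairP P z v) hc
    have h1 := hdist 0
    have h2 := hz s hs
    have h3 := le_abs_self (pairP P v z - pairP P s z)
    have h5 := pairP_comm (P := P) v z
    linarith
  · rintro v ⟨hvG, hv⟩
    refine ⟨hvG, ?_⟩
    intro n w hw ε hε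
    by_contra hcon
    push_neg at hcon
    set T : (Ω →ₘ[P] ℝ) → (Fin n → ℝ) := fun x i => pairP P x (w i) with hT
    have hconv : Convex ℝ (closure (T '' S)) := by
      apply Convex.closure
      rintro a ⟨x, hx, rfl⟩ b ⟨y, hy, rfl⟩ ca cb hca hcb hcab
      refine ⟨ca • x + cb • y, hS.2.1 _ (hS.2.2 ca hca x hx) _ (hS.2.2 cb hcb y hy), ?_⟩
      funext i
      have h1 : Integrable (fun ω => (ca • x) ω * (w i) ω) P :=
        hint _ (hSG (hS.2.2 ca hca x hx)) (w i) (hw i)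
      have h2 : Integrable (fun ω => (cb • y) ω * (w i) ω) P :=
        hint _ (hSG (hS.2.2 cb hcb y hy)) (w i) (hw i)
      simp only [hT, Pi.add_apply, Pi.smul_apply, smul_eq_mul]
      rw [pairP_add_left (w i) h1 h2, pairP_smul_left, pairP_smul_left]
    have hTv : T v ∉ closure (T '' S) := by
      rw [Metric.mem_closure_iff]
      push_neg
      refine ⟨ε, hε, ?_⟩
      rintro b ⟨s, hs, rfl⟩
      obtain ⟨i, hi⟩ := hcon s hs
      calc ε ≤ |pairP P v (w i) - pairP P s (w i)| := hi
        _ = ‖(T v - T s) i‖ := by simp [hT, Real.norm_eq_abs]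
        _ ≤ ‖T v - T s‖ := norm_le_pi_norm _ i
        _ = dist (T v) (T s) := (dist_eq_norm _ _).symm
    obtain ⟨f, u, hfa, hfx⟩ := geometric_hahn_banach_closed_point hconv isClosed_closure hTv
    have h0S : (0 : Ω →ₘ[P] ℝ) ∈ S := zero_mem_wedge hS
    have hu : 0 < u := by
      have h0 : (0 : Fin n → ℝ) ∈ closure (T '' S) :=
        subset_closure ⟨0, h0S, by funext i; simp [hT, pairP_zero_left]⟩
      simpa using hfa 0 h0
    have hfS : ∀ s ∈ S, f (T s) ≤ 0 := by
      intro s hs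
      by_contra hpos
      push_neg at hpos
      set c := (u + 1) / f (T s) with hcdef
      have hc : 0 ≤ c := div_nonneg (by linarith) hpos.le
      have hmem : T (c • s) ∈ closure (T '' S) := subset_closure ⟨c • s, hS.2.2 c hc s hs, rfl⟩
      have hTc : T (c • s) = c • T s := by
        funext i; simp [hT, pairP_smul_left]
      have hlt := hfa _ hmem
      rw [hTc, f.map_smul, smul_eq_mul, hcdef, div_mul_cancel₀ _ (ne_of_gt hpos)] at hlt
      linarith
    classical
    set z := ∑ i, f ((Pi.single (M := fun _ : Fin n => ℝ) i 1)) • w i with hzdef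
    have hzD : z ∈ D := sum_smul_mem_D hD0 hDadd hDsmul _ w hw _
    have hpair : ∀ x ∈ G, pairP P x z = f (T x) := by
      intro x hx
      rw [hzdef, pairP_sum_right hD0 hDadd hDsmul _ w hw x (fun w' hw' => hint x hx w' hw')]
      have hTx : T x = ∑ i, (T x i) • (Pi.single (M := fun _ : Fin n => ℝ) i 1) := by
        have h1 : ∀ i : Fin n, (T x i) • (Pi.single (M := fun _ : Fin n => ℝ) i 1) = Pi.single i (T x i) := by
          intro i
          funext j
          by_cases h : j = i <;> simp [Pi.single_apply, h]
        rw [Finset.sum_congr rfl (fun i _ => h1 i), Finset.univ_sum_single]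
      conv_rhs => rw [hTx]
      rw [_root_.map_sum]
      refine Finset.sum_congr rfl fun i _ => ?_
      rw [f.map_smul, smul_eq_mul, mul_comm]
    have hzpolar : z ∈ polarIn P D S := by
      refine ⟨hzD, fun s hs => ?_⟩
      rw [hpair s (hSG hs)]
      exact hfS s hs
    have hle := hv z hzpolar
    rw [pairP_comm, hpair v hvG] at hle
    linarith

end Bipolar
/-! ## the "previous result": `s_E(K)^◁ = F ∩ cone(R(M₁))` -/

section Prev
variable {P : Measure Ω}

lemma prev_result (P : Measure Ω) [IsProbabilityMeasure P]
    (K : Set (Ω →ₘ[P] ℝ)) (hK : IsWedgeF K)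
    (M : Set (Measure Ω)) (hM : M ⊆ Msep P K) :
    polarIn P (Fspace P M) (umbrella P K (Espace P M))
      = Fspace P M ∩ wedgeGenF (dens P '' Msep P K) := by
  have hMac : ∀ Q ∈ M, Q ≪ P := fun Q hQ => (hM hQ).2.1
  have hMfin : ∀ Q ∈ M, IsFiniteMeasure Q := fun Q hQ => by
    haveI := (hM hQ).1; infer_instance
  have hKE : K ⊆ Espace P M := fun X hX Q hQ => ((hM hQ).2.2 X hX).1
  have h0K : (0 : Ω →ₘ[P] ℝ) ∈ K := zero_mem_wedge hK
  have h0E : (0 : Ω →ₘ[P] ℝ) ∈ Espace P M := Espace.zero_mem hMac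
  have h0coe : (0 : Ω →ₘ[P] ℝ) =ᵐ[P] fun _ => (0:ℝ) := AEEqFun.coeFn_zero (β := ℝ)
  apply Set.Subset.antisymm
  · -- hard direction: polar of umbrella ⊆ F ∩ cone(R(M₁))
    rintro w ⟨hwF, hw⟩
    refine ⟨hwF, ?_⟩
    have hwmeas : Measurable (w : Ω → ℝ) := w.measurable
    -- step b: nonnegative pairing against nonnegative elements of E
    have hstepb : ∀ p ∈ Espace P M, (0 ≤ᵐ[P] (p : Ω → ℝ)) →
        0 ≤ ∫ ω, p ω * w ω ∂P := by
      intro p hpE hp0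
      have hmem : (0 - p : Ω →ₘ[P] ℝ) ∈ umbrella P K (Espace P M) :=
        ⟨0, h0K, p, hpE, hp0, rfl⟩
      have hle := hw _ hmem
      have hpw : Integrable (fun ω => p ω * w ω) P := integrable_mul_EF hMac hMfin hpE hwF
      have h0int : Integrable (fun ω => (0 : Ω →ₘ[P] ℝ) ω * w ω) P := by
        apply (integrable_zero Ω ℝ P).congr
        filter_upwards [h0coe] with ω h
        rw [h]; simp
      rw [pairP_sub_left w h0int hpw, pairP_zero_left] at hle
      have : pairP P p w = ∫ ω, p ω * w ω ∂P := rfl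
      linarith
    -- w is integrable
    have h1E : (1 : Ω →ₘ[P] ℝ) ∈ Espace P M := Espace.one_mem hMac hMfin
    have hwInt : Integrable (w : Ω → ℝ) P := by
      apply (integrable_mul_EF hMac hMfin h1E hwF).congr
      filter_upwards [AEEqFun.coeFn_one (β := ℝ) (μ := P)] with ω h
      rw [h]; simp
    -- step c: w ≥ 0 a.e.
    have hw0 : 0 ≤ᵐ[P] (w : Ω → ℝ) := by
      set s : Set Ω := {ω | w ω < 0} with hsdef
      have hs : MeasurableSet s := measurableSet_lt hwmeas measurable_const
      set pf : Ω → ℝ := s.indicator (fun _ => (1:ℝ)) with hpfdef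
      have hpfm : Measurable pf := measurable_const.indicator hs
      set p : Ω →ₘ[P] ℝ := AEEqFun.mk pf hpfm.aestronglyMeasurable with hpdef
      have hpcoe : (p : Ω → ℝ) =ᵐ[P] pf := AEEqFun.coeFn_mk _ _
      have hpE : p ∈ Espace P M := by
        intro Q hQ
        haveI := (hM hQ).1
        exact (((integrable_const (1:ℝ)).indicator hs)).congr
          (((hM hQ).2.1).ae_eq hpcoe).symm
      have hp0 : 0 ≤ᵐ[P] (p : Ω → ℝ) := by
        filter_upwards [hpcoe] with ω h
        rw [h]; exact Set.indicator_nonneg (fun _ _ => zero_le_one) ω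
      have h1 := hstepb p hpE hp0
      have heq : (fun ω => p ω * w ω) =ᵐ[P] s.indicator (w : Ω → ℝ) := by
        filter_upwards [hpcoe] with ω h
        rw [h, hpfdef]
        by_cases hω : ω ∈ s <;> simp [Set.indicator_of_mem, Set.indicator_of_notMem, hω]
      have hIndInt : Integrable (s.indicator (w : Ω → ℝ)) P := hwInt.indicator hs
      have hle : ∫ ω, s.indicator (w : Ω → ℝ) ω ∂P ≤ 0 := by
        apply integral_nonpos_of_ae
        apply Filter.Eventually.of_forall
        intro ω
        simp only [Pi.zero_apply]
        by_cases hω : ω ∈ s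
        · rw [Set.indicator_of_mem hω]; exact le_of_lt hω
        · rw [Set.indicator_of_notMem hω]
      have hzero : ∫ ω, s.indicator (w : Ω → ℝ) ω ∂P = 0 := by
        rw [← integral_congr_ae heq]
        rw [← integral_congr_ae heq] at hle
        exact le_antisymm hle h1
      have hnn : 0 ≤ᵐ[P] fun ω => - s.indicator (w : Ω → ℝ) ω := by
        apply Filter.Eventually.of_forall
        intro ω
        simp only [Pi.zero_apply, neg_nonneg]
        by_cases hω : ω ∈ s
        · rw [Set.indicator_of_mem hω]; exact le_of_lt hω
        · rw [Set.indicator_of_notMem hω]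
      have hae := (integral_eq_zero_iff_of_nonneg_ae hnn hIndInt.neg).1
        (by rw [integral_neg, hzero, neg_zero])
      filter_upwards [hae] with ω h
      simp only [Pi.zero_apply, neg_eq_zero] at h
      simp only [Pi.zero_apply]
      by_contra hneg
      push_neg at hneg
      have hωs : ω ∈ s := hneg
      rw [Set.indicator_of_mem hωs] at h
      linarith
    -- case on total mass
    set c := ∫ ω, w ω ∂P with hcdef
    by_cases hc : c = 0
    · have hwae : (w : Ω → ℝ) =ᵐ[P] 0 := (integral_eq_zero_iff_of_nonneg_ae hw0 hwInt).1 hc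
      have hweq : w = 0 := AEEqFun.ext (hwae.trans h0coe.symm)
      rw [hweq]
      exact zero_mem_wedgeGenF _
    · have hcpos : 0 < c := lt_of_le_of_ne (integral_nonneg_of_ae hw0) (Ne.symm hc)
      set d : Ω → ℝ≥0∞ := fun ω => ENNReal.ofReal (w ω / c) with hddef
      have hdmeas : Measurable d := (hwmeas.div_const c).ennreal_ofReal
      set Q := P.withDensity d with hQdef
      have hQac : Q ≪ P := withDensity_absolutelyContinuous P d
      have hrn : Q.rnDeriv P =ᵐ[P] d := Measure.rnDeriv_withDensity P hdmeas
      have hQprob : IsProbabilityMeasure Q := by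
        constructor
        rw [hQdef, withDensity_apply d MeasurableSet.univ, setLIntegral_univ, hddef,
          ← ofReal_integral_eq_lintegral_ofReal (hwInt.div_const c)
            (by filter_upwards [hw0] with ω h; exact div_nonneg h hcpos.le),
          integral_div, div_self hc, ENNReal.ofReal_one]
      haveI := hQprob
      have hdens : (dens P Q : Ω → ℝ) =ᵐ[P] fun ω => w ω / c := by
        filter_upwards [dens_coeFn Q, hrn, hw0] with ω h1 h2 h3
        rw [h1, h2]
        exact ENNReal.toReal_ofReal (div_nonneg h3 hcpos.le)
      have hQsep : Q ∈ Msep P K := by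
        refine ⟨hQprob, hQac, ?_⟩
        intro X hX
        have hXw : Integrable (fun ω => X ω * w ω) P :=
          integrable_mul_EF hMac hMfin (hKE hX) hwF
        have hXdens : Integrable (fun ω => X ω * dens P Q ω) P := by
          apply (hXw.div_const c).congr
          filter_upwards [hdens] with ω h
          rw [h]; ring
        have hXQ : Integrable (X : Ω → ℝ) Q := (integrable_mul_dens_iff hQac X).1 hXdens
        refine ⟨hXQ, ?_⟩
        rw [← pairP_dens hQac X]
        have hXumb : X ∈ umbrella P K (Espace P M) :=
          ⟨X, hX, 0, h0E, by filter_upwards [h0coe] with ω h; rw [h]; simp, (sub_zero X).symm⟩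
        have hXw_le : pairP P X w ≤ 0 := hw X hXumb
        have heq2 : pairP P X (dens P Q) = (∫ ω, X ω * w ω ∂P) / c := by
          unfold pairP
          rw [← integral_div]
          apply integral_congr_ae
          filter_upwards [hdens] with ω h
          rw [h]; ring
        rw [heq2]
        exact div_nonpos_of_nonpos_of_nonneg hXw_le hcpos.le
      have hwdens : w = c • dens P Q := by
        apply AEEqFun.ext
        filter_upwards [AEEqFun.coeFn_smul c (dens P Q), hdens] with ω h1 h2
        rw [h1, Pi.smul_apply, h2, smul_eq_mul, mul_div_cancel₀ _ hc]
      rw [hwdens]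
      exact (isWedgeF_wedgeGenF _).2.2 c hcpos.le _
        (subset_wedgeGenF _ ⟨Q, hQsep, rfl⟩)
  · -- easy direction
    rintro w ⟨hwF, hwW⟩
    refine ⟨hwF, ?_⟩
    rintro z ⟨g, hg, p, hpE, hp0, rfl⟩
    have hWg : IsWedgeF {w' : Ω →ₘ[P] ℝ | (0 ≤ᵐ[P] (w' : Ω → ℝ)) ∧
        Integrable (fun ω => g ω * w' ω) P ∧ ∫ ω, g ω * w' ω ∂P ≤ 0} := by
      refine ⟨⟨0, ?_, ?_, ?_⟩, ?_, ?_⟩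
      · filter_upwards [h0coe] with ω h; rw [h]; simp
      · apply (integrable_zero Ω ℝ P).congr
        filter_upwards [h0coe] with ω h; rw [h]; simp
      · have : (fun ω => g ω * (0 : Ω →ₘ[P] ℝ) ω) =ᵐ[P] fun _ => (0:ℝ) := by
          filter_upwards [h0coe] with ω h; rw [h]; simp
        rw [integral_congr_ae this]; simp
      · rintro x ⟨hx0, hxi, hxle⟩ y ⟨hy0, hyi, hyle⟩
        refine ⟨?_, ?_, ?_⟩
        · filter_upwards [AEEqFun.coeFn_add x y, hx0, hy0] with ω h h1 h2
          rw [h]; exact add_nonneg h1 h2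
        · apply (hxi.add hyi).congr
          filter_upwards [AEEqFun.coeFn_add x y] with ω h
          rw [h]; simp; ring
        · have : (fun ω => g ω * (x + y : Ω →ₘ[P] ℝ) ω)
              =ᵐ[P] fun ω => g ω * x ω + g ω * y ω := by
            filter_upwards [AEEqFun.coeFn_add x y] with ω h
            rw [h]; simp; ring
          rw [integral_congr_ae this, integral_add hxi hyi]
          linarith
      · rintro a ha x ⟨hx0, hxi, hxle⟩
        refine ⟨?_, ?_, ?_⟩
        · filter_upwards [AEEqFun.coeFn_smul a x, hx0] with ω h h1
          rw [h]; exact smul_nonneg ha h1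
        · apply (hxi.smul a).congr
          filter_upwards [AEEqFun.coeFn_smul a x] with ω h
          rw [h]; simp; ring
        · have : (fun ω => g ω * (a • x : Ω →ₘ[P] ℝ) ω)
              =ᵐ[P] fun ω => a * (g ω * x ω) := by
            filter_upwards [AEEqFun.coeFn_smul a x] with ω h
            rw [h]; simp; ring
          rw [integral_congr_ae this, integral_const_mul]
          exact mul_nonpos_of_nonneg_of_nonpos ha hxle
    have hsub : dens P '' Msep P K ⊆ {w' : Ω →ₘ[P] ℝ | (0 ≤ᵐ[P] (w' : Ω → ℝ)) ∧
        Integrable (fun ω => g ω * w' ω) P ∧ ∫ ω, g ω * w' ω ∂P ≤ 0} := by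
      rintro _ ⟨Q, hQ, rfl⟩
      obtain ⟨hQprob, hQac, hQint⟩ := hQ
      haveI := hQprob
      refine ⟨dens_nonneg Q, (integrable_mul_dens_iff hQac g).2 (hQint g hg).1, ?_⟩
      rw [show ∫ ω, g ω * dens P Q ω ∂P = pairP P g (dens P Q) from rfl, pairP_dens hQac g]
      exact (hQint g hg).2
    obtain ⟨hwpos, hgwInt, hgwle⟩ := wedgeGenF_subset hWg hsub hwW
    have hpw : Integrable (fun ω => p ω * w ω) P := integrable_mul_EF hMac hMfin hpE hwF
    rw [pairP_sub_left w hgwInt hpw]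
    have hpw0 : 0 ≤ ∫ ω, p ω * w ω ∂P :=
      integral_nonneg_of_ae (by filter_upwards [hp0, hwpos] with ω h1 h2; exact mul_nonneg h1 h2)
    have e1 : pairP P g w = ∫ ω, g ω * w ω ∂P := rfl
    have e2 : pairP P p w = ∫ ω, p ω * w ω ∂P := rfl
    linarith

end Prev
/-- Equivalence of the duality relations: (i) the `σ(F,E)`-closure of
`cone(R(M))` equals `F ∩ cone(R(M₁))`; (ii) `R(M)^◁ = c_E(K)`; (iii) the
`σ(F,E)`-closure of `cone(R(M))` equals `c_E(K)^◁ = s_E(K)^◁`. -/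
theorem symmetric_duality (P : Measure Ω) [IsProbabilityMeasure P]
    (K : Set (Ω →ₘ[P] ℝ)) (hK : IsWedgeF K)
    (M : Set (Measure Ω)) (hMne : M.Nonempty) (hM : M ⊆ Msep P K) :
    ((Fspace P M ∩ wcl P (Espace P M) (wedgeGenF (dens P '' M))
        = Fspace P M ∩ wedgeGenF (dens P '' Msep P K))
      ↔ polarIn P (Espace P M) (dens P '' M) = cEK P K M)
    ∧ ((Fspace P M ∩ wcl P (Espace P M) (wedgeGenF (dens P '' M))
        = Fspace P M ∩ wedgeGenF (dens P '' Msep P K))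
      ↔ (Fspace P M ∩ wcl P (Espace P M) (wedgeGenF (dens P '' M))
            = polarIn P (Fspace P M) (cEK P K M)
          ∧ Fspace P M ∩ wcl P (Espace P M) (wedgeGenF (dens P '' M))
            = polarIn P (Fspace P M) (umbrella P K (Espace P M)))) := by
  have hMac : ∀ Q ∈ M, Q ≪ P := fun Q hQ => (hM hQ).2.1
  have hMfin : ∀ Q ∈ M, IsFiniteMeasure Q := fun Q hQ => by
    haveI := (hM hQ).1; infer_instance
  have hKE : K ⊆ Espace P M := fun X hX Q hQ => ((hM hQ).2.2 X hX).1
  have h0K : (0 : Ω →ₘ[P] ℝ) ∈ K := zero_mem_wedge hK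
  have h0E : (0 : Ω →ₘ[P] ℝ) ∈ Espace P M := Espace.zero_mem hMac
  have h0coe : (0 : Ω →ₘ[P] ℝ) =ᵐ[P] fun _ => (0:ℝ) := AEEqFun.coeFn_zero (β := ℝ)
  -- wedge structure of `F`
  have hF : IsWedgeF (Fspace P M) := by
    refine ⟨⟨0, Submodule.zero_mem _⟩, ?_, ?_⟩
    · intro x hx y hy; exact Submodule.add_mem _ hx hy
    · intro c _ x hx; exact Submodule.smul_mem _ c hx
  have hAF : dens P '' M ⊆ Fspace P M := Submodule.subset_span
  have hWF : wedgeGenF (dens P '' M) ⊆ Fspace P M := wedgeGenF_subset hF hAF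
  have hWwedge : IsWedgeF (wedgeGenF (dens P '' M)) := isWedgeF_wedgeGenF _
  -- integrability
  have hintE : ∀ x ∈ Espace P M, ∀ w ∈ Fspace P M,
      Integrable (fun ω => x ω * w ω) P :=
    fun x hx w hw => integrable_mul_EF hMac hMfin hx hw
  have hintF : ∀ x ∈ Fspace P M, ∀ w ∈ Espace P M,
      Integrable (fun ω => x ω * w ω) P :=
    fun x hx w hw => (integrable_mul_EF hMac hMfin hw hx).congr
      (Filter.Eventually.of_forall fun ω => mul_comm _ _)
  -- umbrella is a wedge inside `E`
  have hSE : umbrella P K (Espace P M) ⊆ Espace P M := by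
    rintro z ⟨g, hg, p, hpE, _, rfl⟩
    exact Espace.sub_mem hMac (hKE hg) hpE
  have hSwedge : IsWedgeF (umbrella P K (Espace P M)) := by
    refine ⟨⟨0, 0, h0K, 0, h0E, ?_, (sub_zero 0).symm⟩, ?_, ?_⟩
    · filter_upwards [h0coe] with ω h; rw [h]; simp
    · rintro x ⟨g1, hg1, p1, hp1, hp1n, rfl⟩ y ⟨g2, hg2, p2, hp2, hp2n, rfl⟩
      refine ⟨g1 + g2, hK.2.1 g1 hg1 g2 hg2, p1 + p2, Espace.add_mem hMac hp1 hp2, ?_, ?_⟩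
      · filter_upwards [AEEqFun.coeFn_add p1 p2, hp1n, hp2n] with ω h h1 h2
        rw [h]; exact add_nonneg h1 h2
      · abel
    · rintro c hc x ⟨g, hg, p, hpE, hpn, rfl⟩
      refine ⟨c • g, hK.2.2 c hc g hg, c • p, Espace.smul_mem hMac c hpE, ?_, ?_⟩
      · filter_upwards [AEEqFun.coeFn_smul c p, hpn] with ω h h1
        rw [h]; exact smul_nonneg hc h1
      · rw [smul_sub]
  -- the previous result
  have PREV := prev_result P K hK M hM
  -- bipolar identities
  have B1 : Fspace P M ∩ wcl P (Espace P M) (wedgeGenF (dens P '' M))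
      = polarIn P (Fspace P M) (polarIn P (Espace P M) (wedgeGenF (dens P '' M))) :=
    bipolarF hWF hWwedge h0E (fun x hx y hy => Espace.add_mem hMac hx hy)
      (fun c x hx => Espace.smul_mem hMac c hx) hintF
  have B2 : Espace P M ∩ wcl P (Fspace P M) (umbrella P K (Espace P M))
      = polarIn P (Espace P M) (polarIn P (Fspace P M) (umbrella P K (Espace P M))) :=
    bipolarF hSE hSwedge (Submodule.zero_mem _) (fun x hx y hy => Submodule.add_mem _ hx hy)
      (fun c x hx => Submodule.smul_mem _ c hx) hintE
  have hpwg : polarIn P (Espace P M) (wedgeGenF (dens P '' M))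
      = polarIn P (Espace P M) (dens P '' M) := polarIn_wedgeGenF hAF hF hintF
  have PW1 : polarIn P (Espace P M) (Fspace P M ∩ wcl P (Espace P M) (wedgeGenF (dens P '' M)))
      = polarIn P (Espace P M) (dens P '' M) := (polarIn_wcl hWF).trans hpwg
  have PW2 : polarIn P (Fspace P M) (cEK P K M)
      = polarIn P (Fspace P M) (umbrella P K (Espace P M)) := polarIn_wcl hSE
  have hcEK : cEK P K M = Espace P M ∩ wcl P (Fspace P M) (umbrella P K (Espace P M)) := rfl
  constructor
  · constructor
    · intro h
      have h2 := congrArg (fun s => polarIn P (Espace P M) s) h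
      rw [PW1, ← PREV] at h2
      rw [h2, hcEK, B2]
    · intro h
      calc Fspace P M ∩ wcl P (Espace P M) (wedgeGenF (dens P '' M))
          = polarIn P (Fspace P M) (polarIn P (Espace P M) (wedgeGenF (dens P '' M))) := B1
        _ = polarIn P (Fspace P M) (polarIn P (Espace P M) (dens P '' M)) := by rw [hpwg]
        _ = polarIn P (Fspace P M) (cEK P K M) := by rw [h]
        _ = polarIn P (Fspace P M) (umbrella P K (Espace P M)) := PW2
        _ = Fspace P M ∩ wedgeGenF (dens P '' Msep P K) := PREV
  · rw [PW2, PREV]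
    tauto
end
end
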